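/- Let (𝔪, ε) be a nonempty signed symmetric multisegment in the good-parity setting, with initial sequence Δ₁ ⪰ … ⪰ Δ_l, and with 𝔪# nonempty. Assume e(Δ₁) = e(Δ'₁). Suppose there exists j ≥ 1 such that j ≤ l, j < l', c(Δ_j) = 0, and Δ'_i ⪯ Δ_i for all i ≤ j. Then c(Δ'_{j+1}) ≠ 0. -/

import Mathlib

namespace AZ

/-- A segment in doubled coordinates: the pair `(a, b)` represents the segment
`[a/2, b/2]` whose endpoints lie in `(1/2)ℤ`.  Thus the end `e(Δ)` is `Δ.2 / 2`,
the beginning `b(Δ)` is `Δ.1 / 2`, `Δ` is centered iff `Δ.1 + Δ.2 = 0`, and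
`c(Δ) = 1/2` iff `Δ.1 + Δ.2 = 2`. -/
abbrev Seg := ℤ × ℤ

namespace Seg

/-- Well-formedness of a segment: `a ≤ b` and `a ≡ b [ZMOD 2]`, i.e. `b - a ∈ 2ℕ`. -/
def WF (Δ : Seg) : Prop := Δ.1 ≤ Δ.2 ∧ Δ.1 % 2 = Δ.2 % 2

/-- The dual (contragredient) segment `Δ∨ = [−b, −a]`. -/
def dual (Δ : Seg) : Seg := (-Δ.2, -Δ.1)

/-- `Δ⁻` : the segment with its end removed. -/
def trimEnd (Δ : Seg) : Seg := (Δ.1, Δ.2 - 2)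

/-- `⁻Δ` : the segment with its beginning removed. -/
def trimBeg (Δ : Seg) : Seg := (Δ.1 + 2, Δ.2)

/-- `⁺Δ` : the segment with its beginning extended. -/
def extBeg (Δ : Seg) : Seg := (Δ.1 - 2, Δ.2)

/-- The order on segments: `[x₁,y₁] ≤ [x₂,y₂]` iff `x₁ < x₂`, or `x₁ = x₂` and `y₁ ≥ y₂`. -/
def le (Δ₁ Δ₂ : Seg) : Prop := Δ₁.1 < Δ₂.1 ∨ (Δ₁.1 = Δ₂.1 ∧ Δ₂.2 ≤ Δ₁.2)

end Seg

/-- Labels `≤0`, `=0`, `≥0` for labeled segments. -/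
inductive Label
  | le0 | eq0 | ge0
deriving DecidableEq

/-- Numerical index of a label, used to order the labels `≤0 < =0 < ≥0`. -/
def Label.idx : Label → ℕ
  | .le0 => 0
  | .eq0 => 1
  | .ge0 => 2

/-- A labeled segment: a segment together with a label. -/
abbrev LSeg := Seg × Label

namespace LSeg

/-- The order `⪯` on labeled segments: segments labeled `≤0` precede those labeled `=0`,
which precede those labeled `≥0`; for equal labels `≥0` or `≤0` one compares the segments,
and for label `=0` one compares the ends. -/
def le (Λ₁ Λ₂ : LSeg) : Prop :=
  Λ₁.2.idx < Λ₂.2.idx ∨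
    (Λ₁.2 = Λ₂.2 ∧
      if Λ₁.2 = Label.eq0 then Λ₁.1.2 ≤ Λ₂.1.2 else Seg.le Λ₁.1 Λ₂.1)

/-- The strict order `≺` on labeled segments. -/
def lt (Λ₁ Λ₂ : LSeg) : Prop := LSeg.le Λ₁ Λ₂ ∧ Λ₁ ≠ Λ₂

/-- The contragredient of a labeled segment: for a centered segment the label `≤0`
becomes `≥0` and the labels `=0`, `≥0` are kept; for a non-centered segment the
label is flipped. -/
def dual (Λ : LSeg) : LSeg :=
  (Seg.dual Λ.1,
    if Λ.1.1 + Λ.1.2 = 0 then (if Λ.2 = Label.le0 then Label.ge0 else Λ.2)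
    else
      match Λ.2 with
      | Label.le0 => Label.ge0
      | Label.eq0 => Label.eq0
      | Label.ge0 => Label.le0)

end LSeg

/-- The forced label of a non-centered segment. -/
def forcedLabel (Δ : Seg) : Label := if 0 < Δ.1 + Δ.2 then Label.ge0 else Label.le0

/-- The labeling `s(𝔪)` of a multisegment: each non-centered segment gets its forced
label; a centered segment of multiplicity `m` contributes `⌊m/2⌋` copies labeled `≤0`,
`⌊m/2⌋` copies labeled `≥0`, and `m − 2⌊m/2⌋` copies labeled `=0`. -/
def smap (m : Multiset Seg) : Multiset LSeg :=
  (m.filter fun Δ => ¬ Δ.1 + Δ.2 = 0).map (fun Δ => (Δ, forcedLabel Δ)) +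
    (m.toFinset.filter fun Δ => Δ.1 + Δ.2 = 0).val.bind (fun Δ =>
      Multiset.replicate (m.count Δ / 2) (Δ, Label.le0) +
        Multiset.replicate (m.count Δ / 2) (Δ, Label.ge0) +
        Multiset.replicate (m.count Δ % 2) (Δ, Label.eq0))

/-- A labeled segment is special (the initial sequence stops there): `[0,0]` labeled
`≥0` or `=0` in the integer case; `[1/2,1/2]`, or `[−1/2,1/2]` labeled `≥0` or `=0`
with `ε([−1/2,1/2]) = −1`, in the half-integer case. -/
def Special (ε : Seg → ℤ) (Λ : LSeg) : Prop :=
  (Λ.1 = ((0 : ℤ), (0 : ℤ)) ∧ (Λ.2 = Label.ge0 ∨ Λ.2 = Label.eq0)) ∨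
    Λ.1 = ((1 : ℤ), (1 : ℤ)) ∨
      (Λ.1 = ((-1 : ℤ), (1 : ℤ)) ∧ (Λ.2 = Label.ge0 ∨ Λ.2 = Label.eq0) ∧ ε (-1, 1) = -1)

instance (ε : Seg → ℤ) (Λ : LSeg) : Decidable (Special ε Λ) := by
  unfold Special; infer_instance

/-- The condition for `next` to be a successor of `cur` in the initial sequence:
`next ≺ cur`, `e(next) = e(cur) − 1`, and opposite signs when both are centered. -/
def Succ (ε : Seg → ℤ) (cur next : LSeg) : Prop :=
  LSeg.lt next cur ∧ next.1.2 = cur.1.2 - 2 ∧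
    (cur.1.1 + cur.1.2 = 0 → next.1.1 + next.1.2 = 0 → ε next.1 = - ε cur.1)

/-- `Δ 1, …, Δ l` is the initial sequence in the algorithm for `(m, ε)`:
`Δ 1` is the `⪯`-largest element of `s(m)` with maximal end; recursively,
`Δ (j+1)` is the `⪯`-largest successor of `Δ j`; the sequence stops when the
current segment is special or no successor exists. -/
structure IsInitSeq (m : Multiset Seg) (ε : Seg → ℤ) (Δ : ℕ → LSeg) (l : ℕ) : Prop where
  one_le : 1 ≤ l
  mem : ∀ j, 1 ≤ j → j ≤ l → Δ j ∈ smap m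
  first_max_end : ∀ Λ ∈ smap m, Λ.1.2 ≤ (Δ 1).1.2
  first_max : ∀ Λ ∈ smap m, Λ.1.2 = (Δ 1).1.2 → LSeg.le Λ (Δ 1)
  not_special : ∀ j, 1 ≤ j → j < l → ¬ Special ε (Δ j)
  succ : ∀ j, 1 ≤ j → j < l → Succ ε (Δ j) (Δ (j + 1))
  succ_max : ∀ j, 1 ≤ j → j < l → ∀ Λ ∈ smap m, Succ ε (Δ j) Λ → LSeg.le Λ (Δ (j + 1))
  last : Special ε (Δ l) ∨ ∀ Λ ∈ smap m, ¬ Succ ε (Δ l) Λ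

/-- The sign `ε₀`: `−1` if the sequence stopped at a special segment, `1` otherwise. -/
def eps0 (ε : Seg → ℤ) (Δ : ℕ → LSeg) (l : ℕ) : ℤ :=
  if Special ε (Δ l) then -1 else 1

/-- The number `n₀` of centered segments of `m`. -/
def nCentered (m : Multiset Seg) : ℕ := (m.filter fun Δ => Δ.1 + Δ.2 = 0).card

/-- The sign `ε₁` of the centered segment `𝔪₁` in the case `ε₀ = −1`:
`(−1)^(n₀+1)·ε([0,0])` in the integer case, `(−1)^(n₀)` in the half-integer case. -/
def epsOne (m : Multiset Seg) (ε : Seg → ℤ) (Δ : ℕ → LSeg) : ℤ :=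
  if (Δ 1).1.2 % 2 = 0 then (-1) ^ (nCentered m + 1) * ε (0, 0)
  else (-1) ^ nCentered m

/-- The signed multisegment `𝔪₁`: if `ε₀ = −1` it is the centered segment
`[−e(Δ₁), e(Δ₁)]` with sign `ε₁`; otherwise it is
`[e(Δ_l), e(Δ₁)] + [−e(Δ₁), −e(Δ_l)]` (non-centered segments carry sign `1`). -/
def mOne (m : Multiset Seg) (ε : Seg → ℤ) (Δ : ℕ → LSeg) (l : ℕ) : Multiset (Seg × ℤ) :=
  if Special ε (Δ l) then {((-(Δ 1).1.2, (Δ 1).1.2), epsOne m ε Δ)}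
  else {(((Δ l).1.2, (Δ 1).1.2), 1), ((-(Δ 1).1.2, -(Δ l).1.2), 1)}

/-- The labeled copies `Δ 1, …, Δ l` whose end gets removed. -/
def DEnd (Δ : ℕ → LSeg) (l : ℕ) : Multiset LSeg := (Finset.Icc 1 l).val.map Δ

/-- The labeled copies (the contragredients of the `Δ j`) whose beginning gets removed. -/
def DBeg (Δ : ℕ → LSeg) (l : ℕ) : Multiset LSeg := (DEnd Δ l).map LSeg.dual

/-- The labeled copies trimmed on both sides. -/
def DBoth (Δ : ℕ → LSeg) (l : ℕ) : Multiset LSeg := DEnd Δ l ∩ DBeg Δ l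

/-- The multisegment `𝔪#`: remove the ends of the `Δ j` and the beginnings of their
contragredients (one labeled copy each, both trims if the copy occurs in both lists),
keep all other copies, and discard empty segments. -/
def mHash (m : Multiset Seg) (Δ : ℕ → LSeg) (l : ℕ) : Multiset Seg :=
  (smap m - DEnd Δ l - (DBeg Δ l - DBoth Δ l)).map Prod.fst +
    ((DBoth Δ l).map (fun Λ => ((Λ.1.1 + 2, Λ.1.2 - 2) : Seg)) +
        (DEnd Δ l - DBoth Δ l).map (fun Λ => ((Λ.1.1, Λ.1.2 - 2) : Seg)) +
        (DBeg Δ l - DBoth Δ l).map (fun Λ => ((Λ.1.1 + 2, Λ.1.2) : Seg))).filter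
      fun Δ0 => Δ0.1 ≤ Δ0.2

/-- The trimmed segment `Λ_{i_j}#` obtained from `Δ j`. -/
def trimAt (Δ : ℕ → LSeg) (l : ℕ) (j : ℕ) : Seg :=
  if Δ j ∈ DBeg Δ l then ((Δ j).1.1 + 2, (Δ j).1.2 - 2)
  else ((Δ j).1.1, (Δ j).1.2 - 2)

/-- The sign function `ε#` on (centered) segments of `𝔪#`. -/
def epsHash (m : Multiset Seg) (ε : Seg → ℤ) (Δ : ℕ → LSeg) (l : ℕ) : Seg → ℤ :=
  fun Δ0 =>
    if ∃ j ∈ Finset.Icc 1 l, ((Δ j).1.1 + (Δ j).1.2 = 0 ∧ trimAt Δ l j = Δ0) then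
      eps0 ε Δ l * ε (Δ0.1 - 2, Δ0.2 + 2)
    else if ∃ j ∈ Finset.Icc 1 l,
        ((Δ j).1.1 + (Δ j).1.2 = 2 ∧ trimAt Δ l j = Δ0 ∧ Δ0 ∉ m) then
      eps0 ε Δ l
    else if ∃ j ∈ Finset.Icc 1 l,
        ((Δ j).1.1 + (Δ j).1.2 = 2 ∧ trimAt Δ l j = Δ0 ∧ Δ0 ∈ m) then
      -(eps0 ε Δ l) * ε Δ0
    else eps0 ε Δ l * ε Δ0

/-- The good-parity duality algorithm `AD`, as a relation between the input `(m, ε)`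
and the output signed multisegment: `AD(0) = 0` and
`AD(𝔪, ε) = (𝔪₁, ε₁) + AD(𝔪#, ε#)`. -/
inductive IsAD : Multiset Seg → (Seg → ℤ) → Multiset (Seg × ℤ) → Prop
  | zero (ε : Seg → ℤ) : IsAD 0 ε 0
  | step {m : Multiset Seg} {ε : Seg → ℤ} {Δ : ℕ → LSeg} {l : ℕ} {d : Multiset (Seg × ℤ)}
      (hm : m ≠ 0) (hseq : IsInitSeq m ε Δ l)
      (hrec : IsAD (mHash m Δ l) (epsHash m ε Δ l) d) :
      IsAD m ε (mOne m ε Δ l + d)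

/-- A valid signed symmetric multisegment in the good-parity setting. -/
structure GoodInput (m : Multiset Seg) (ε : Seg → ℤ) : Prop where
  wf : ∀ Δ0 ∈ m, Seg.WF Δ0
  symm : m.map Seg.dual = m
  parity : ∀ Δ₁ ∈ m, ∀ Δ₂ ∈ m, Δ₁.2 % 2 = Δ₂.2 % 2
  sign : ∀ Δ0, ε Δ0 = 1 ∨ ε Δ0 = -1

/-! Suppose `Δ_i` and `Δ'_{i+1}` are both centered. Comparing ends and labels forces
`Δ'_i = Δ_i = [-e, e]` as segments, with labels other than `≤0`, so `Δ_i` is trimmed on both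
sides and `Δ'_{i+1} = [-e+1, e-1]` is its trimmed copy. If `Δ_{i-1}` is centered as well, the
same situation occurs one step earlier, so it suffices to rule out the other cases. If
`Δ_{i-1} = [-e, e+1]`, then `Δ_i` must carry the label `=0`, and so must `Δ'_i`; hence `[-e, e]`
has odd multiplicity in `𝔪#`, whereas counting the trimmed copies shows that this multiplicity is
`2⌊n/2⌋ + 2`, with `n` its multiplicity in `𝔪`. Otherwise no segment trimmed to `[-e, e]` has its sign altered by `ε#`, so `ε#`
gives `[-e, e]` and `[-e+1, e-1]` the same sign, contradicting the sign alternation required of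
the initial sequence of `(𝔪#, ε#)`. -/

open Multiset

lemma _root_.Multiset.count_map_eq_count_of_fiber {α β : Type*} [DecidableEq α] [DecidableEq β]
    {D : Multiset α} {f : α → β} {a : α} {b : β} (h : ∀ x ∈ D, f x = b ↔ x = a) :
    (D.map f).count b = D.count a := by
  rw [count_map, count_eq_card_filter_eq]
  exact congrArg card (filter_congr fun x hx => by rw [eq_comm, h x hx, eq_comm])

lemma _root_.Finset.count_map_val_eq_ite {α β : Type*} [DecidableEq β] {s : Finset α} {f : α → β}
    {a : α} {b : β} (ha : a ∈ s) (huniq : ∀ x ∈ s, f x = b → x = a) :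
    (s.val.map f).count b = if f a = b then 1 else 0 := by
  classical
  split_ifs with hab
  · rw [Multiset.count_map_eq_count_of_fiber (a := a) fun x hx =>
      ⟨huniq x hx, fun hxa => hxa ▸ hab⟩]
    exact count_eq_one_of_mem s.nodup ha
  · refine count_eq_zero.2 fun hb => ?_
    obtain ⟨x, hx, hfx⟩ := mem_map.1 hb
    exact hab (huniq x hx hfx ▸ hfx)

lemma count_map_fst_lseg (S : Multiset LSeg) (s : Seg) :
    (S.map Prod.fst).count s = S.count (s, Label.le0) + S.count (s, Label.eq0) +
      S.count (s, Label.ge0) := by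
  induction S using Multiset.induction_on with
  | empty => simp
  | cons a S ih =>
    obtain ⟨t, lab⟩ := a
    by_cases hst : s = t
    · subst hst; cases lab <;> simp [ih] <;> omega
    · simp [ih, hst]

section Smap

variable {M : Multiset Seg} {Λ : LSeg}

lemma fst_mem_of_mem_smap (h : Λ ∈ smap M) : Λ.1 ∈ M := by
  simp only [smap, mem_add, mem_map, mem_filter, mem_bind, Finset.mem_val, Finset.mem_filter,
    mem_toFinset, mem_replicate] at h
  rcases h with ⟨Δ0, ⟨hm, -⟩, rfl⟩ | ⟨Δ0, ⟨hm, -⟩, (⟨-, rfl⟩ | ⟨-, rfl⟩) | ⟨-, rfl⟩⟩ <;> exact hm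

lemma centered_or_forcedLabel_of_mem_smap (h : Λ ∈ smap M) :
    Λ.1.1 + Λ.1.2 = 0 ∨ Λ.2 = forcedLabel Λ.1 := by
  simp only [smap, mem_add, mem_map, mem_filter, mem_bind, Finset.mem_val, Finset.mem_filter,
    mem_toFinset, mem_replicate] at h
  rcases h with ⟨Δ0, -, rfl⟩ | ⟨Δ0, ⟨-, hc⟩, (⟨-, rfl⟩ | ⟨-, rfl⟩) | ⟨-, rfl⟩⟩
  exacts [Or.inr rfl, Or.inl hc, Or.inl hc, Or.inl hc]

lemma sum_nonpos_of_mem_smap (h : Λ ∈ smap M) (hl : Λ.2 = Label.le0) : Λ.1.1 + Λ.1.2 ≤ 0 := by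
  rcases centered_or_forcedLabel_of_mem_smap h with hc | hf
  · exact hc.le
  · rw [hl, forcedLabel] at hf; split_ifs at hf; omega

lemma sum_eq_zero_of_mem_smap (h : Λ ∈ smap M) (hl : Λ.2 = Label.eq0) : Λ.1.1 + Λ.1.2 = 0 := by
  rcases centered_or_forcedLabel_of_mem_smap h with hc | hf
  · exact hc
  · rw [hl, forcedLabel] at hf; split_ifs at hf

lemma sum_nonneg_of_mem_smap (h : Λ ∈ smap M) (hl : Λ.2 = Label.ge0) : 0 ≤ Λ.1.1 + Λ.1.2 := by
  rcases centered_or_forcedLabel_of_mem_smap h with hc | hf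
  · exact hc.ge
  · rw [hl, forcedLabel] at hf; split_ifs at hf; omega

lemma count_smap_of_centered {s : Seg} (hs : s.1 + s.2 = 0) (lab : Label) :
    (smap M).count (s, lab) =
      (replicate (M.count s / 2) (s, Label.le0) + replicate (M.count s / 2) (s, Label.ge0) +
        replicate (M.count s % 2) (s, Label.eq0)).count (s, lab) := by
  have hforced : ((M.filter fun Δ => ¬ Δ.1 + Δ.2 = 0).map
      fun Δ => (Δ, forcedLabel Δ)).count (s, lab) = 0 := by
    simp only [count_eq_zero, mem_map, mem_filter, not_exists, not_and, Prod.mk.injEq]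
    rintro _ ⟨-, hc⟩ rfl
    exact absurd hs hc
  rw [smap, count_add, hforced, zero_add, count_bind]
  refine (Finset.sum_eq_single s (fun t _ hts => ?_) (fun hs' => ?_)).trans rfl
  · simp [count_replicate, hts]
  · simp only [Finset.mem_filter, mem_toFinset, not_and] at hs'
    simp [count_eq_zero_of_notMem (fun h => hs' h hs)]

lemma count_odd_of_eq0_mem_smap {s : Seg} (h : (s, Label.eq0) ∈ smap M) :
    M.count s % 2 = 1 := by
  have hs := sum_eq_zero_of_mem_smap h rfl
  have hpos := count_pos.2 h
  rw [count_smap_of_centered hs] at hpos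
  simp only [count_add, count_replicate, Prod.mk.injEq, reduceCtorEq, and_false, ↓reduceIte,
    add_zero, zero_add] at hpos
  omega

lemma count_map_fst_smap_sub_of_centered {D₁ D₂ : Multiset LSeg} {s : Seg}
    (hs : s.1 + s.2 = 0) (hodd : M.count s % 2 = 1)
    (h₁ : ∀ lab, D₁.count (s, lab) = if lab = Label.eq0 then 1 else 0)
    (h₂ : ∀ lab, D₂.count (s, lab) = if lab = Label.eq0 then 1 else 0) :
    ((smap M - D₁ - (D₂ - D₁ ∩ D₂)).map Prod.fst).count s = 2 * (M.count s / 2) := by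
  simp only [count_map_fst_lseg, count_sub, count_inter, h₁, h₂, count_smap_of_centered hs,
    count_add, count_replicate]
  simp only [↓reduceIte, Prod.mk.injEq, reduceCtorEq, and_false, add_zero, tsub_zero, min_self,
    tsub_self, zero_add]
  omega

end Smap

namespace IsInitSeq

variable {m : Multiset Seg} {ε : Seg → ℤ} {Δ : ℕ → LSeg} {l : ℕ}

lemma end_eq (hseq : IsInitSeq m ε Δ l) {i : ℕ} (h1 : 1 ≤ i) (h2 : i ≤ l) :
    (Δ i).1.2 = (Δ 1).1.2 - 2 * ((i : ℤ) - 1) := by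
  induction i, h1 using Nat.le_induction with
  | base => simp
  | succ n hn ih =>
    rw [(hseq.succ n hn (by omega)).2.1, ih (by omega)]
    push_cast
    ring

lemma eq_of_end_eq (hseq : IsInitSeq m ε Δ l) {a b : ℕ} (ha : a ∈ Finset.Icc 1 l)
    (hb : b ∈ Finset.Icc 1 l) (h : (Δ a).1.2 = (Δ b).1.2) : a = b := by
  rw [Finset.mem_Icc] at ha hb
  have := hseq.end_eq ha.1 ha.2
  have := hseq.end_eq hb.1 hb.2
  omega

lemma succ_eq_of_end_eq_add_two (hseq : IsInitSeq m ε Δ l) {k i : ℕ} (hk : k ∈ Finset.Icc 1 l)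
    (hi1 : 1 ≤ i) (hil : i ≤ l) (h : (Δ k).1.2 = (Δ i).1.2 + 2) : k + 1 = i := by
  rw [Finset.mem_Icc] at hk
  have := hseq.end_eq hk.1 hk.2
  have := hseq.end_eq hi1 hil
  omega

lemma count_DEnd (hseq : IsInitSeq m ε Δ l) {i : ℕ} (hi : i ∈ Finset.Icc 1 l) {Λ : LSeg}
    (hΛ : Λ.1.2 = (Δ i).1.2) : (DEnd Δ l).count Λ = if Δ i = Λ then 1 else 0 :=
  Finset.count_map_val_eq_ite hi fun k hk hkΛ =>
    hseq.eq_of_end_eq hk hi (by rw [hkΛ, hΛ])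

lemma count_DBeg (hseq : IsInitSeq m ε Δ l) {i : ℕ} (hi : i ∈ Finset.Icc 1 l) {Λ : LSeg}
    (hΛ : Λ.1.1 = -(Δ i).1.2) : (DBeg Δ l).count Λ = if LSeg.dual (Δ i) = Λ then 1 else 0 := by
  rw [DBeg, DEnd, Multiset.map_map]
  exact Finset.count_map_val_eq_ite hi fun k hk hkΛ =>
    hseq.eq_of_end_eq hk hi (neg_inj.1 (by rw [← hΛ, ← hkΛ]; rfl))

lemma eq_of_mem_DEnd (hseq : IsInitSeq m ε Δ l) {i : ℕ} (hi : i ∈ Finset.Icc 1 l) {Λ : LSeg}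
    (hΛ : Λ ∈ DEnd Δ l) (h : Λ.1.2 = (Δ i).1.2) : Λ = Δ i := by
  obtain ⟨k, hk, rfl⟩ := mem_map.1 hΛ
  rw [hseq.eq_of_end_eq hk hi h]

lemma eq_of_mem_DBeg (hseq : IsInitSeq m ε Δ l) {i : ℕ} (hi : i ∈ Finset.Icc 1 l) {Λ : LSeg}
    (hΛ : Λ ∈ DBeg Δ l) (h : Λ.1.1 = -(Δ i).1.2) : Λ = LSeg.dual (Δ i) := by
  obtain ⟨_, hΛ0, rfl⟩ := mem_map.1 hΛ
  obtain ⟨k, hk, rfl⟩ := mem_map.1 hΛ0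
  rw [hseq.eq_of_end_eq hk hi (neg_inj.1 h)]

end IsInitSeq

lemma LSeg.dual_eq_self {Λ : LSeg} (hc : Λ.1.1 + Λ.1.2 = 0) (hl : Λ.2 ≠ Label.le0) :
    LSeg.dual Λ = Λ := by
  obtain ⟨⟨a, b⟩, lab⟩ := Λ
  simp only [LSeg.dual, Seg.dual, if_pos hc, if_neg hl, Prod.mk.injEq, and_true]
  simp only at hc
  omega

section Trim

variable {m : Multiset Seg} {ε : Seg → ℤ} {Δ : ℕ → LSeg} {l : ℕ}

lemma trimAt_snd (i : ℕ) : (trimAt Δ l i).2 = (Δ i).1.2 - 2 := by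
  unfold trimAt; split_ifs <;> rfl

lemma trimAt_of_dual_eq_self {i : ℕ} (hi : i ∈ Finset.Icc 1 l) (hd : LSeg.dual (Δ i) = Δ i) :
    trimAt Δ l i = ((Δ i).1.1 + 2, (Δ i).1.2 - 2) := by
  have hmem : Δ i ∈ DBeg Δ l := hd ▸ mem_map_of_mem _ (mem_map_of_mem _ hi)
  rw [trimAt, if_pos hmem]

lemma epsHash_trimAt_of_centered {k : ℕ} (hk : k ∈ Finset.Icc 1 l)
    (hc : (Δ k).1.1 + (Δ k).1.2 = 0) :
    epsHash m ε Δ l (trimAt Δ l k) =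
      eps0 ε Δ l * ε ((trimAt Δ l k).1 - 2, (trimAt Δ l k).2 + 2) :=
  if_pos ⟨k, hk, hc, rfl⟩

lemma epsHash_of_forall_trimAt_ne {s : Seg}
    (h : ∀ k ∈ Finset.Icc 1 l, ((Δ k).1.1 + (Δ k).1.2 = 0 ∨ (Δ k).1.1 + (Δ k).1.2 = 2) →
      trimAt Δ l k ≠ s) :
    epsHash m ε Δ l s = eps0 ε Δ l * ε s := by
  unfold epsHash
  rw [if_neg, if_neg, if_neg]
  · rintro ⟨k, hk, hc, htrim, -⟩; exact h k hk (Or.inr hc) htrim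
  · rintro ⟨k, hk, hc, htrim, -⟩; exact h k hk (Or.inr hc) htrim
  · rintro ⟨k, hk, hc, htrim⟩; exact h k hk (Or.inl hc) htrim

end Trim

lemma fst_eq_of_le_of_centered_succ {M : Multiset Seg} {Λ Λ' μ : LSeg}
    (hΛ' : Λ' ∈ smap M) (hμ : μ ∈ smap M) (hc : Λ.1.1 + Λ.1.2 = 0)
    (hle : LSeg.le Λ' Λ) (hend : Λ'.1.2 = Λ.1.2)
    (hμΛ' : LSeg.le μ Λ') (hμc : μ.1.1 + μ.1.2 = 0) (hμend : μ.1.2 = Λ'.1.2 - 2) :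
    Λ'.1 = Λ.1 ∧ Λ'.2 ≠ Label.le0 ∧ Λ.2 ≠ Label.le0 := by
  have hle0 := fun h => sum_nonpos_of_mem_smap hΛ' h
  have heq0 := fun h => sum_eq_zero_of_mem_smap hΛ' h
  have hge0 := fun h => sum_nonneg_of_mem_smap hΛ' h
  have hμle0 := fun h => sum_nonpos_of_mem_smap hμ h
  obtain ⟨⟨a, b⟩, L⟩ := Λ
  obtain ⟨⟨a', b'⟩, L'⟩ := Λ'
  obtain ⟨⟨c, d⟩, Lμ⟩ := μ
  simp only [LSeg.le, Seg.le, Prod.mk.injEq] at *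
  cases L <;> cases L' <;> cases Lμ <;> simp [Label.idx] at * <;> omega

lemma labels_of_le_of_same_beg {M : Multiset Seg} {Λ μ : LSeg} (hΛ : Λ ∈ smap M)
    (hpos : 0 < Λ.1.1 + Λ.1.2) (hbeg : μ.1.1 = Λ.1.1) (hend : μ.1.2 < Λ.1.2)
    (hle : LSeg.le μ Λ) (hμ : μ.2 ≠ Label.le0) :
    Λ.2 = Label.ge0 ∧ μ.2 = Label.eq0 := by
  have hle0 := fun h => sum_nonpos_of_mem_smap hΛ h
  have heq0 := fun h => sum_eq_zero_of_mem_smap hΛ h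
  obtain ⟨⟨a, b⟩, L⟩ := Λ
  obtain ⟨⟨c, d⟩, Lμ⟩ := μ
  simp only [LSeg.le, Seg.le] at *
  cases L <;> cases Lμ <;> simp [Label.idx] at * <;> omega

lemma LSeg.label_eq_eq0_of_le {Λ Λ' : LSeg} (hle : LSeg.le Λ' Λ) (hΛ : Λ.2 = Label.eq0)
    (hΛ' : Λ'.2 ≠ Label.le0) : Λ'.2 = Label.eq0 := by
  obtain ⟨_, L⟩ := Λ
  obtain ⟨_, L'⟩ := Λ'
  simp only [LSeg.le] at *
  subst hΛ
  cases L' <;> simp [Label.idx] at *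

section GeEq

variable {m : Multiset Seg} {ε : Seg → ℤ} {Δ : ℕ → LSeg} {l k : ℕ} {e : ℤ}

lemma IsInitSeq.count_DBoth_trimBoth_of_ge0 (hseq : IsInitSeq m ε Δ l) (hk : k ∈ Finset.Icc 1 l)
    (hΔk : Δ k = ((-e, e + 2), Label.ge0)) :
    ((DBoth Δ l).map fun Λ => ((Λ.1.1 + 2, Λ.1.2 - 2) : Seg)).count (-e, e) = 0 := by
  refine count_eq_zero.2 fun h => ?_
  obtain ⟨Λ, hΛ, heq⟩ := mem_map.1 h
  simp only [Prod.mk.injEq] at heq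
  have := hseq.eq_of_mem_DEnd hk (mem_inter.1 hΛ).1 (by rw [hΔk]; dsimp only; omega)
  rw [this, hΔk] at heq
  simp at heq

lemma IsInitSeq.count_DEnd_trimEnd_of_ge0_eq0 (hseq : IsInitSeq m ε Δ l)
    (hk : k ∈ Finset.Icc 1 l) (hk1 : k + 1 ∈ Finset.Icc 1 l)
    (hΔk : Δ k = ((-e, e + 2), Label.ge0)) (hΔk1 : Δ (k + 1) = ((-e, e), Label.eq0)) :
    ((DEnd Δ l - DBoth Δ l).map fun Λ => ((Λ.1.1, Λ.1.2 - 2) : Seg)).count (-e, e) = 1 := by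
  rw [count_map_eq_count_of_fiber (a := Δ k)]
  · rw [count_sub, DBoth, count_inter, hseq.count_DEnd hk rfl, if_pos rfl,
      hseq.count_DBeg hk1 (by simp [hΔk, hΔk1]), hΔk, hΔk1]
    simp [LSeg.dual, Seg.dual]
  · intro Λ hΛ
    refine ⟨fun h => ?_, fun h => by rw [h, hΔk]; simp⟩
    simp only [Prod.mk.injEq] at h
    exact hseq.eq_of_mem_DEnd hk (mem_of_le (Multiset.sub_le_self _ _) hΛ)
      (by rw [hΔk]; dsimp only; omega)

lemma IsInitSeq.count_DBeg_trimBeg_of_ge0_eq0 (hseq : IsInitSeq m ε Δ l)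
    (hk : k ∈ Finset.Icc 1 l) (hk1 : k + 1 ∈ Finset.Icc 1 l)
    (hΔk : Δ k = ((-e, e + 2), Label.ge0)) (hΔk1 : Δ (k + 1) = ((-e, e), Label.eq0)) :
    ((DBeg Δ l - DBoth Δ l).map fun Λ => ((Λ.1.1 + 2, Λ.1.2) : Seg)).count (-e, e) = 1 := by
  rw [count_map_eq_count_of_fiber (a := LSeg.dual (Δ k))]
  · rw [count_sub, DBoth, count_inter, hseq.count_DBeg hk rfl, if_pos rfl,
      hseq.count_DEnd hk1 (by simp [hΔk, hΔk1, LSeg.dual, Seg.dual]), hΔk, hΔk1]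
    simp [LSeg.dual, Seg.dual]
  · intro Λ hΛ
    refine ⟨fun h => ?_, fun h => by rw [h, hΔk]; simp [LSeg.dual, Seg.dual]⟩
    simp only [Prod.mk.injEq] at h
    exact hseq.eq_of_mem_DBeg hk (mem_of_le (Multiset.sub_le_self _ _) hΛ)
      (by rw [hΔk]; dsimp only; omega)

lemma IsInitSeq.count_mHash_of_ge0_eq0 (hseq : IsInitSeq m ε Δ l) (hk : k ∈ Finset.Icc 1 l)
    (hk1 : k + 1 ∈ Finset.Icc 1 l) (hΔk : Δ k = ((-e, e + 2), Label.ge0))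
    (hΔk1 : Δ (k + 1) = ((-e, e), Label.eq0)) (hee : -e ≤ e) :
    (mHash m Δ l).count (-e, e) = 2 * (m.count (-e, e) / 2) + 2 := by
  have hk1' := Finset.mem_Icc.1 hk1
  have hodd : m.count (-e, e) % 2 = 1 :=
    count_odd_of_eq0_mem_smap (hΔk1 ▸ hseq.mem (k + 1) hk1'.1 hk1'.2)
  have hEnd : ∀ lab, (DEnd Δ l).count ((-e, e), lab) = if lab = Label.eq0 then 1 else 0 := by
    intro lab
    rw [hseq.count_DEnd hk1 (by rw [hΔk1]), hΔk1]
    simp [eq_comm]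
  have hBeg : ∀ lab, (DBeg Δ l).count ((-e, e), lab) = if lab = Label.eq0 then 1 else 0 := by
    intro lab
    rw [hseq.count_DBeg hk1 (by rw [hΔk1]), hΔk1]
    simp [LSeg.dual, Seg.dual, eq_comm]
  have hkept : ((smap m - DEnd Δ l - (DBeg Δ l - DBoth Δ l)).map Prod.fst).count (-e, e) =
      2 * (m.count (-e, e) / 2) :=
    count_map_fst_smap_sub_of_centered (by simp) hodd hEnd hBeg
  rw [mHash, count_add, count_filter_of_pos (p := fun Δ0 : Seg => Δ0.1 ≤ Δ0.2) hee, count_add,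
    count_add, hkept, hseq.count_DBoth_trimBoth_of_ge0 hk hΔk,
    hseq.count_DEnd_trimEnd_of_ge0_eq0 hk hk1 hΔk hΔk1,
    hseq.count_DBeg_trimBeg_of_ge0_eq0 hk hk1 hΔk hΔk1]

lemma IsInitSeq.eq0_not_mem_smap_mHash (hseq : IsInitSeq m ε Δ l) (hk : k ∈ Finset.Icc 1 l)
    (hk1 : k + 1 ∈ Finset.Icc 1 l) (hΔk : Δ k = ((-e, e + 2), Label.ge0))
    (hΔk1 : Δ (k + 1) = ((-e, e), Label.eq0)) (hee : -e ≤ e) :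
    ((-e, e), Label.eq0) ∉ smap (mHash m Δ l) := fun h => by
  have hodd := count_odd_of_eq0_mem_smap h
  rw [hseq.count_mHash_of_ge0_eq0 hk hk1 hΔk hΔk1 hee] at hodd
  omega

end GeEq

lemma eps0_ne_zero (ε : Seg → ℤ) (Δ : ℕ → LSeg) (l : ℕ) : eps0 ε Δ l ≠ 0 := by
  unfold eps0; split_ifs <;> norm_num

lemma exists_prev_centered_pair {m : Multiset Seg} {ε : Seg → ℤ} {Δ Δ' : ℕ → LSeg} {l l' : ℕ}
    (hgood : GoodInput m ε) (hseq : IsInitSeq m ε Δ l)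
    (hseq' : IsInitSeq (mHash m Δ l) (epsHash m ε Δ l) Δ' l') {i : ℕ} (hi1 : 1 ≤ i)
    (hil : i ≤ l) (hil' : i < l') (hend : (Δ' i).1.2 = (Δ i).1.2) (hle : LSeg.le (Δ' i) (Δ i))
    (hc : (Δ i).1.1 + (Δ i).1.2 = 0) (hc' : (Δ' (i + 1)).1.1 + (Δ' (i + 1)).1.2 = 0) :
    ∃ k, 1 ≤ k ∧ k + 1 = i ∧ (Δ k).1.1 + (Δ k).1.2 = 0 ∧
      (Δ' (k + 1)).1.1 + (Δ' (k + 1)).1.2 = 0 := by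
  by_contra hprev
  set e := (Δ i).1.2
  have hi : i ∈ Finset.Icc 1 l := Finset.mem_Icc.2 ⟨hi1, hil⟩
  have hΔi := hseq.mem i hi1 hil
  have hΔ'i := hseq'.mem i hi1 hil'.le
  obtain ⟨⟨hlt, -⟩, hnext_end, hsign⟩ := hseq'.succ i hi1 hil'
  obtain ⟨hseg, hL', hL⟩ := fst_eq_of_le_of_centered_succ hΔ'i (hseq'.mem (i + 1) (by omega) hil')
    hc hle hend hlt hc' hnext_end
  have hΔiseg : (Δ i).1 = (-e, e) := Prod.ext (show _ = -e by omega) rfl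
  have hnext : (Δ' (i + 1)).1 = (2 - e, e - 2) :=
    Prod.ext (show _ = 2 - e by omega) (show _ = e - 2 by omega)
  have htrim : trimAt Δ l i = (2 - e, e - 2) := by
    rw [trimAt_of_dual_eq_self hi (LSeg.dual_eq_self hc hL), hΔiseg]
    ring_nf
  have hfree : ∀ k ∈ Finset.Icc 1 l,
      ((Δ k).1.1 + (Δ k).1.2 = 0 ∨ (Δ k).1.1 + (Δ k).1.2 = 2) → trimAt Δ l k ≠ (-e, e) := by
    intro k hk hck htrim
    have hkend : (Δ k).1.2 = e + 2 := by
      have := trimAt_snd (Δ := Δ) (l := l) k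
      rw [htrim] at this
      dsimp only at this
      omega
    obtain ⟨hk1, hkl⟩ := Finset.mem_Icc.1 hk
    obtain rfl := hseq.succ_eq_of_end_eq_add_two hk hi1 hil hkend
    rcases hck with hck | hck
    · exact hprev ⟨k, hk1, rfl, hck, by rw [hseg]; exact hc⟩
    obtain ⟨hLk, hLk1⟩ := labels_of_le_of_same_beg (hseq.mem k hk1 hkl) (by omega) (by omega)
      (by omega) (hseq.succ k hk1 hil).1.1 hL
    have hΔ'eq : Δ' (k + 1) = ((-e, e), Label.eq0) :=
      Prod.ext (hseg.trans hΔiseg) (LSeg.label_eq_eq0_of_le hle hLk1 hL')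
    have hwf := (hgood.wf _ (fst_mem_of_mem_smap hΔi)).1
    rw [hΔiseg] at hwf
    exact hseq.eq0_not_mem_smap_mHash hk hi (Prod.ext (Prod.ext (show _ = -e by omega) hkend) hLk)
      (Prod.ext hΔiseg hLk1) hwf (hΔ'eq ▸ hΔ'i)
  have hepsNext : epsHash m ε Δ l (2 - e, e - 2) = eps0 ε Δ l * ε (-e, e) := by
    rw [← htrim, epsHash_trimAt_of_centered hi hc, htrim]
    norm_num
  replace hsign := hsign (by rw [hseg]; exact hc) hc'
  rw [hnext, hseg, hΔiseg, hepsNext, epsHash_of_forall_trimAt_ne hfree] at hsign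
  have hε : ε (-e, e) ≠ 0 := by rcases hgood.sign (-e, e) with h | h <;> simp [h]
  exact mul_ne_zero (eps0_ne_zero ε Δ l) hε (by linarith)

theorem stmt2_general (m : Multiset Seg) (ε : Seg → ℤ) (hgood : GoodInput m ε)
    (Δ : ℕ → LSeg) (l : ℕ) (hseq : IsInitSeq m ε Δ l)
    (Δ' : ℕ → LSeg) (l' : ℕ)
    (hseq' : IsInitSeq (mHash m Δ l) (epsHash m ε Δ l) Δ' l')
    (hE : (Δ 1).1.2 = (Δ' 1).1.2)
    (j : ℕ) (hj1 : 1 ≤ j) (hjl : j ≤ l) (hjl' : j < l')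
    (hcj : (Δ j).1.1 + (Δ j).1.2 = 0)
    (hall : ∀ i, 1 ≤ i → i ≤ j → LSeg.le (Δ' i) (Δ i)) :
    (Δ' (j + 1)).1.1 + (Δ' (j + 1)).1.2 ≠ 0 := by
  induction j with
  | zero => omega
  | succ k ih =>
    intro hc'
    have hend : (Δ' (k + 1)).1.2 = (Δ (k + 1)).1.2 := by
      rw [hseq'.end_eq hj1 hjl'.le, hseq.end_eq hj1 hjl, hE]
    obtain ⟨k', hk', hkk', hck, hck'⟩ := exists_prev_centered_pair hgood hseq hseq' hj1 hjl hjl'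
      hend (hall _ hj1 le_rfl) hcj hc'
    obtain rfl : k' = k := by omega
    exact ih hk' (by omega) (by omega) hck (fun i h1 h2 => hall i h1 (by omega)) hck'

/-- Lemma 6.0.3: with `Δ'` the initial sequence of `(𝔪#, ε#)`,
assume `e(Δ₁) = e(Δ'₁)`; if `1 ≤ j ≤ l`, `j < l'`, `c(Δ_j) = 0` and `Δ'_i ⪯ Δ_i`
for all `i ≤ j`, then `c(Δ'_{j+1}) ≠ 0`. -/
theorem stmt2 (m : Multiset Seg) (ε : Seg → ℤ) (hgood : GoodInput m ε) (hne : m ≠ 0)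
    (Δ : ℕ → LSeg) (l : ℕ) (hseq : IsInitSeq m ε Δ l)
    (Δ' : ℕ → LSeg) (l' : ℕ) (hne' : mHash m Δ l ≠ 0)
    (hseq' : IsInitSeq (mHash m Δ l) (epsHash m ε Δ l) Δ' l')
    (hE : (Δ 1).1.2 = (Δ' 1).1.2)
    (j : ℕ) (hj1 : 1 ≤ j) (hjl : j ≤ l) (hjl' : j < l')
    (hcj : (Δ j).1.1 + (Δ j).1.2 = 0)
    (hall : ∀ i, 1 ≤ i → i ≤ j → LSeg.le (Δ' i) (Δ i)) :
    (Δ' (j + 1)).1.1 + (Δ' (j + 1)).1.2 ≠ 0 :=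
  stmt2_general m ε hgood Δ l hseq Δ' l' hseq' hE j hj1 hjl hjl' hcj hall

end AZ
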